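/- Let n ≥ 5 be an odd integer and let k be an integer with 1 ≤ k ≤ (n-3)/2. Then Σ_{i=1}^{(n-1)/2} e_{2i} · g_{n-2i,n} · ∏_{j=k-i+1}^{(n-1)/2 - i} (q^{2j} - 1)/(q^{2j-2k+2i} - 1) = ((q^{nk} - 1)/(q - 1)) · ∏_{j=k+1}^{(n-1)/2} (q^{2j} - 1)/(q^{2j-2k} - 1) in K, where products are over all integers j in the indicated range (an empty product equals 1), and q^m for m ≤ 0 is interpreted in K using the invertibility of q. -/

import Mathlib

/-! Write `n = 2m + 1` and `Q = q²`. Through the unnormalised `q`-factorials `∏_{u=1}^{r} (x^u - 1)`,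
splitting those of `q` into odd and even factors, the `i`-th summand becomes
`[k, i]_Q · ∏_{s < i} (q^n - Q^s) · C`, with `C` the product on the right divided by `q - 1`
(for `i > k` both sides vanish). The identity is then the `q`-analogue of Newton's interpolation
formula `∑_i [k, i]_Q ∏_{s < i} (y - Q^s) = y^k` at `y = q^n`, minus its `i = 0` term. -/

open Finset

/-- The indeterminate `q` in the field `K = RatFunc ℚ`. -/
noncomputable def q : RatFunc ℚ := RatFunc.X

/-- Gaussian binomial coefficient `[m, r]_x` with integer arguments:
`∏_{i=0}^{r-1} (1 - x^(m-i))/(1 - x^(i+1))` if `0 ≤ r ≤ m`, and `0` otherwise. -/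
noncomputable def gauss (x : RatFunc ℚ) (m r : ℤ) : RatFunc ℚ :=
  if 0 ≤ r ∧ r ≤ m then
    ∏ i ∈ Finset.range r.toNat, (1 - x ^ (m - (i : ℤ))) / (1 - x ^ ((i : ℤ) + 1))
  else 0

/-- `e_{2i}`: the E-polynomial of the space of nondegenerate skew forms on `ℂ^{2i}`
up to scaling: `q^{i(i-1)} (∏_{j=1}^{i} (q^{2j-1} - 1))/(q - 1)`. -/
noncomputable def e (i : ℤ) : RatFunc ℚ :=
  q ^ (i * (i - 1)) * (∏ j ∈ Finset.Icc (1 : ℤ) i, (q ^ (2 * j - 1) - 1)) / (q - 1)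

section QAnalogues

variable {R : Type*} [CommRing R]

/-- Unnormalised: the usual `q`-factorial times `(x - 1)^n`. -/
def qFactorial (x : R) (n : ℕ) : R := ∏ u ∈ range n, (x ^ (u + 1) - 1)

def qOddFactorial (x : R) (n : ℕ) : R := ∏ j ∈ range n, (x ^ (2 * j + 1) - 1)

def qChoose (x : R) : ℕ → ℕ → R
  | _, 0 => 1
  | 0, _ + 1 => 0
  | n + 1, k + 1 => qChoose x n k + x ^ (k + 1) * qChoose x n (k + 1)

@[simp]
lemma qChoose_zero_right (x : R) (n : ℕ) : qChoose x n 0 = 1 := by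
  cases n <;> rfl

lemma qChoose_succ_succ (x : R) (n k : ℕ) :
    qChoose x (n + 1) (k + 1) = qChoose x n k + x ^ (k + 1) * qChoose x n (k + 1) := rfl

lemma qChoose_eq_zero_of_lt (x : R) : ∀ {n k : ℕ}, n < k → qChoose x n k = 0
  | 0, _ + 1, _ => rfl
  | n + 1, k + 1, h => by
    rw [qChoose_succ_succ, qChoose_eq_zero_of_lt x (by omega), qChoose_eq_zero_of_lt x (by omega),
      mul_zero, add_zero]

lemma qChoose_self (x : R) : ∀ n : ℕ, qChoose x n n = 1
  | 0 => rfl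
  | n + 1 => by
    rw [qChoose_succ_succ, qChoose_self x n, qChoose_eq_zero_of_lt x n.lt_succ_self, mul_zero,
      add_zero]

@[simp]
lemma qFactorial_zero (x : R) : qFactorial x 0 = 1 := prod_range_zero _

lemma qFactorial_succ (x : R) (n : ℕ) :
    qFactorial x (n + 1) = qFactorial x n * (x ^ (n + 1) - 1) :=
  prod_range_succ _ _

lemma qOddFactorial_succ (x : R) (n : ℕ) :
    qOddFactorial x (n + 1) = qOddFactorial x n * (x ^ (2 * n + 1) - 1) :=
  prod_range_succ _ _

lemma qFactorial_add (x : R) (a b : ℕ) :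
    qFactorial x (a + b) = qFactorial x a * ∏ t ∈ range b, (x ^ (a + t + 1) - 1) :=
  prod_range_add _ _ _

lemma qChoose_add_mul_qFactorial_mul_qFactorial (x : R) : ∀ r s : ℕ,
    qChoose x (r + s) r * qFactorial x r * qFactorial x s = qFactorial x (r + s)
  | 0, s => by simp
  | r + 1, 0 => by simp [qChoose_self]
  | r + 1, s + 1 => by
    have h₁ := qChoose_add_mul_qFactorial_mul_qFactorial x r (s + 1)
    have h₂ := qChoose_add_mul_qFactorial_mul_qFactorial x (r + 1) s
    rw [show r + (s + 1) = r + s + 1 by omega] at h₁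
    rw [show r + 1 + s = r + s + 1 by omega] at h₂
    rw [show r + 1 + (s + 1) = r + s + 1 + 1 by omega, qChoose_succ_succ]
    simp only [qFactorial_succ] at h₁ h₂ ⊢
    linear_combination (x ^ (r + 1) - 1) * h₁ + x ^ (r + 1) * (x ^ (s + 1) - 1) * h₂

theorem sum_range_qChoose_mul_prod_sub_pow (x y : R) {k N : ℕ} (hkN : k < N) :
    ∑ i ∈ range N, qChoose x k i * ∏ s ∈ range i, (y - x ^ s) = y ^ k := by
  obtain ⟨N, rfl⟩ : ∃ N', N = N' + 1 := ⟨N - 1, by omega⟩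
  induction k generalizing N with
  | zero => simp [sum_range_succ', qChoose]
  | succ k ih =>
    obtain ⟨N, rfl⟩ : ∃ N', N = N' + 1 := ⟨N - 1, by omega⟩
    -- multiplication by `y` acts on the basis `∏_{s < i} (y - x^s)` as the `q`-Pascal rule dictates
    have hyq : ∀ i, y * (qChoose x k i * ∏ s ∈ range i, (y - x ^ s)) =
        qChoose x k i * ∏ s ∈ range (i + 1), (y - x ^ s) +
          x ^ i * (qChoose x k i * ∏ s ∈ range i, (y - x ^ s)) := fun i => by
      rw [prod_range_succ]; ring
    have hshift : ∑ i ∈ range (N + 1 + 1), qChoose x k i * ∏ s ∈ range (i + 1), (y - x ^ s) =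
        ∑ i ∈ range (N + 1), qChoose x k i * ∏ s ∈ range (i + 1), (y - x ^ s) := by
      rw [sum_range_succ, qChoose_eq_zero_of_lt x (show k < N + 1 by omega), zero_mul, add_zero]
    have hpeel : ∑ i ∈ range (N + 1 + 1), x ^ i * (qChoose x k i * ∏ s ∈ range i, (y - x ^ s)) =
        ∑ i ∈ range (N + 1), x ^ (i + 1) * qChoose x k (i + 1) * ∏ s ∈ range (i + 1), (y - x ^ s) +
          1 := by
      rw [sum_range_succ']
      simp [mul_assoc]
    rw [pow_succ', ← ih (N + 1) (by omega), mul_sum]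
    simp only [hyq, sum_add_distrib, hshift, hpeel]
    rw [sum_range_succ']
    simp only [qChoose_succ_succ, add_mul, sum_add_distrib, qChoose_zero_right]
    rw [prod_range_zero, mul_one, add_assoc]

lemma qFactorial_two_mul (x : R) (r : ℕ) :
    qFactorial x (2 * r) = qOddFactorial x r * qFactorial (x ^ 2) r := by
  induction r with
  | zero => simp [qOddFactorial]
  | succ r ih =>
    rw [show 2 * (r + 1) = 2 * r + 1 + 1 by ring, qFactorial_succ, qFactorial_succ, ih,
      qOddFactorial_succ, qFactorial_succ]
    ring

lemma qFactorial_two_mul_add_one (x : R) (r : ℕ) :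
    qFactorial x (2 * r + 1) = qOddFactorial x (r + 1) * qFactorial (x ^ 2) r := by
  rw [qFactorial_succ, qFactorial_two_mul, qOddFactorial_succ]
  ring

lemma prod_range_pow_sub_pow_mul_qOddFactorial (x : R) {m i : ℕ} (him : i ≤ m) :
    (∏ s ∈ range i, (x ^ (2 * m + 1) - (x ^ 2) ^ s)) * qOddFactorial x (m - i + 1) =
      x ^ (i * (i - 1)) * qOddFactorial x (m + 1) := by
  induction i with
  | zero => simp
  | succ i ih =>
    have hexp : 2 * i + i * (i - 1) = (i + 1) * (i + 1 - 1) := by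
      cases i <;> simp; ring
    have hfactor : x ^ (2 * m + 1) - (x ^ 2) ^ i = x ^ (2 * i) * (x ^ (2 * (m - i) + 1) - 1) := by
      rw [mul_sub, mul_one, ← pow_mul, ← pow_add,
        show 2 * i + (2 * (m - i) + 1) = 2 * m + 1 by omega]
    have ih' := ih (by omega)
    rw [qOddFactorial_succ] at ih'
    rw [prod_range_succ, ← hexp, pow_add x (2 * i), hfactor, show m - (i + 1) + 1 = m - i by omega]
    linear_combination x ^ (2 * i) * ih'

lemma qFactorial_ne_zero [IsDomain R] {x : R} (hx : ¬IsOfFinOrder x) (n : ℕ) :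
    qFactorial x n ≠ 0 :=
  prod_ne_zero_iff.2 fun u _ h =>
    hx (isOfFinOrder_iff_pow_eq_one.2 ⟨u + 1, u.succ_pos, sub_eq_zero.1 h⟩)

lemma qOddFactorial_ne_zero [IsDomain R] {x : R} (hx : ¬IsOfFinOrder x) (n : ℕ) :
    qOddFactorial x n ≠ 0 :=
  prod_ne_zero_iff.2 fun j _ h =>
    hx (isOfFinOrder_iff_pow_eq_one.2 ⟨2 * j + 1, by omega, sub_eq_zero.1 h⟩)

lemma qChoose_add_eq_div {K : Type*} [Field K] {x : K} (hx : ¬IsOfFinOrder x) (r s : ℕ) :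
    qChoose x (r + s) r = qFactorial x (r + s) / (qFactorial x r * qFactorial x s) := by
  rw [eq_div_iff (mul_ne_zero (qFactorial_ne_zero hx r) (qFactorial_ne_zero hx s)), ← mul_assoc,
    qChoose_add_mul_qFactorial_mul_qFactorial]

end QAnalogues

lemma not_isOfFinOrder_q : ¬IsOfFinOrder q := by
  rw [isOfFinOrder_iff_pow_eq_one]
  rintro ⟨n, hn, h⟩
  apply Polynomial.X_pow_sub_C_ne_zero hn (1 : ℚ)
  apply RatFunc.algebraMap_injective ℚ
  simpa [q, sub_eq_zero] using h

lemma not_isOfFinOrder_q_sq : ¬IsOfFinOrder (q ^ 2) := by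
  simp [isOfFinOrder_pow, not_isOfFinOrder_q]

lemma q_sub_one_ne_zero : q - 1 ≠ 0 :=
  sub_ne_zero.2 fun h => not_isOfFinOrder_q (h ▸ IsOfFinOrder.one)

@[to_additive]
lemma prod_Icc_int_eq_prod_range {M : Type*} [CommMonoid M] (f : ℤ → M) (a : ℤ) (n : ℕ) :
    ∏ j ∈ Icc (a + 1) (a + n), f j = ∏ t ∈ range n, f (a + t + 1) :=
  prod_nbij' (fun j => (j - a - 1).toNat) (fun t => a + t + 1)
    (fun j hj => by simp only [mem_Icc, mem_range] at hj ⊢; omega)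
    (fun t ht => by simp only [mem_Icc, mem_range] at ht ⊢; omega)
    (fun j hj => by simp only [mem_Icc] at hj; omega)
    (fun t _ => by omega)
    (fun j hj => by simp only [mem_Icc] at hj; congr 1; omega)

lemma e_natCast (i : ℕ) : e i = q ^ (i * (i - 1)) * qOddFactorial q i / (q - 1) := by
  have hexp : (i : ℤ) * (i - 1) = ((i * (i - 1) : ℕ) : ℤ) := by
    cases i <;> simp
  have hprod := prod_Icc_int_eq_prod_range (fun j => q ^ (2 * j - 1) - 1) 0 i
  simp only [zero_add] at hprod
  rw [e, hexp, zpow_natCast, hprod, qOddFactorial]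
  congr 3 with t
  rw [show 2 * ((t : ℤ) + 1) - 1 = ((2 * t + 1 : ℕ) : ℤ) by push_cast; ring, zpow_natCast]

lemma gauss_natCast_add {x : RatFunc ℚ} (hx : ¬IsOfFinOrder x) (r s : ℕ) :
    gauss x (r + s : ℕ) r = qFactorial x (r + s) / (qFactorial x r * qFactorial x s) := by
  have hterm : ∀ t ∈ range r, (1 - x ^ (((r + s : ℕ) : ℤ) - t)) / (1 - x ^ ((t : ℤ) + 1)) =
      (x ^ (s + (r - 1 - t) + 1) - 1) / (x ^ (t + 1) - 1) := fun t ht => by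
    rw [mem_range] at ht
    rw [← neg_sub _ (1 : RatFunc ℚ), ← neg_sub _ (1 : RatFunc ℚ), neg_div_neg_eq,
      show ((r + s : ℕ) : ℤ) - t = ((s + (r - 1 - t) + 1 : ℕ) : ℤ) by omega, zpow_natCast,
      show (t : ℤ) + 1 = ((t + 1 : ℕ) : ℤ) by push_cast; ring, zpow_natCast]
  rw [gauss, if_pos (by omega), Int.toNat_natCast, prod_congr rfl hterm, prod_div_distrib,
    prod_range_reflect (fun t => x ^ (s + t + 1) - 1), ← qFactorial, add_comm r s,
    qFactorial_add x s r, qFactorial]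
  have := qFactorial_ne_zero hx s
  field_simp

lemma prod_Icc_q_pow_sub_one_div (a c : ℕ) :
    ∏ j ∈ Icc ((a : ℤ) + 1) (a + c), (q ^ (2 * j) - 1) / (q ^ (2 * j - 2 * a) - 1) =
      qFactorial (q ^ 2) (a + c) / (qFactorial (q ^ 2) a * qFactorial (q ^ 2) c) := by
  have hfactor : ∀ t : ℕ,
      (q ^ (2 * ((a : ℤ) + t + 1)) - 1) / (q ^ (2 * ((a : ℤ) + t + 1) - 2 * a) - 1) =
        ((q ^ 2) ^ (a + t + 1) - 1) / ((q ^ 2) ^ (t + 1) - 1) := fun t => by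
    rw [← pow_mul, ← pow_mul, ← zpow_natCast, ← zpow_natCast]
    push_cast
    ring_nf
  rw [prod_Icc_int_eq_prod_range, prod_congr rfl fun t _ => hfactor t, prod_div_distrib,
    qFactorial_add, ← qFactorial]
  have := qFactorial_ne_zero not_isOfFinOrder_q_sq a
  field_simp

lemma summand_eq {k m i : ℕ} (hkm : k ≤ m) (him : i ≤ m) :
    e i * gauss q (2 * m + 1) (2 * m + 1 - 2 * i) *
        ∏ j ∈ Icc ((k : ℤ) - i + 1) (m - i), (q ^ (2 * j) - 1) / (q ^ (2 * j - 2 * k + 2 * i) - 1) =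
      qChoose (q ^ 2) k i * (∏ s ∈ range i, (q ^ (2 * m + 1) - (q ^ 2) ^ s)) *
        ((∏ j ∈ Icc ((k : ℤ) + 1) m, (q ^ (2 * j) - 1) / (q ^ (2 * j - 2 * k) - 1)) / (q - 1)) := by
  rcases le_or_gt i k with hik | hki
  · have hgauss : gauss q (2 * m + 1) (2 * m + 1 - 2 * i) =
        qFactorial q (2 * (m - i) + 1 + 2 * i) /
          (qFactorial q (2 * (m - i) + 1) * qFactorial q (2 * i)) := by
      convert gauss_natCast_add not_isOfFinOrder_q (2 * (m - i) + 1) (2 * i) using 2 <;> omega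
    rw [show 2 * (m - i) + 1 + 2 * i = 2 * m + 1 by omega, qFactorial_two_mul_add_one,
      qFactorial_two_mul_add_one, qFactorial_two_mul] at hgauss
    have hinner : ∏ j ∈ Icc ((k : ℤ) - i + 1) (m - i),
        (q ^ (2 * j) - 1) / (q ^ (2 * j - 2 * k + 2 * i) - 1) =
          qFactorial (q ^ 2) (m - i) /
            (qFactorial (q ^ 2) (k - i) * qFactorial (q ^ 2) (m - k)) := by
      convert prod_Icc_q_pow_sub_one_div (k - i) (m - k) using 5 <;> omega
    have hrhs : ∏ j ∈ Icc ((k : ℤ) + 1) m, (q ^ (2 * j) - 1) / (q ^ (2 * j - 2 * k) - 1) =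
        qFactorial (q ^ 2) m / (qFactorial (q ^ 2) k * qFactorial (q ^ 2) (m - k)) := by
      convert prod_Icc_q_pow_sub_one_div k (m - k) using 3 <;> omega
    have hchoose := qChoose_add_eq_div not_isOfFinOrder_q_sq i (k - i)
    rw [Nat.add_sub_cancel' hik] at hchoose
    have hprod := eq_div_of_mul_eq (qOddFactorial_ne_zero not_isOfFinOrder_q _)
      (prod_range_pow_sub_pow_mul_qOddFactorial q him)
    rw [e_natCast, hgauss, hinner, hchoose, hprod, hrhs]
    field_simp [qFactorial_ne_zero not_isOfFinOrder_q_sq, qOddFactorial_ne_zero not_isOfFinOrder_q,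
      q_sub_one_ne_zero]
  · rw [prod_eq_zero (i := 0) (by simp; omega) (by simp), qChoose_eq_zero_of_lt _ hki]
    simp

theorem stmt4_general (n k : ℤ) (hodd : Odd n) (hk1 : 1 ≤ k) (hk2 : k ≤ (n - 3) / 2) :
    ∑ i ∈ Finset.Icc (1 : ℤ) ((n - 1) / 2),
      e i * gauss q n (n - 2 * i) *
        ∏ j ∈ Finset.Icc (k - i + 1) ((n - 1) / 2 - i),
          (q ^ (2 * j) - 1) / (q ^ (2 * j - 2 * k + 2 * i) - 1) =
    ((q ^ (n * k) - 1) / (q - 1)) *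
      ∏ j ∈ Finset.Icc (k + 1) ((n - 1) / 2),
        (q ^ (2 * j) - 1) / (q ^ (2 * j - 2 * k) - 1) := by
  obtain ⟨m, rfl⟩ := hodd
  lift k to ℕ using by omega
  lift m to ℕ using by omega
  have hkm : k ≤ m := by omega
  have hnewton :=
    sum_range_qChoose_mul_prod_sub_pow (q ^ 2) (q ^ (2 * m + 1)) (Nat.lt_succ_of_le hkm)
  rw [sum_range_succ', qChoose_zero_right, prod_range_zero, mul_one, ← eq_sub_iff_add_eq] at hnewton
  rw [show (2 * (m : ℤ) + 1 - 1) / 2 = m by omega]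
  conv_lhs =>
    rw [show Icc (1 : ℤ) m = Icc ((0 : ℤ) + 1) (0 + (m : ℕ)) by simp, sum_Icc_int_eq_sum_range]
    simp only [zero_add, ← Nat.cast_succ]
  rw [sum_congr rfl fun t ht => summand_eq hkm (by simp only [mem_range] at ht; omega), ← sum_mul,
    hnewton, ← pow_mul, ← zpow_natCast]
  push_cast
  ring

theorem stmt4 (n k : ℤ) (hn : 5 ≤ n) (hodd : Odd n) (hk1 : 1 ≤ k) (hk2 : k ≤ (n - 3) / 2) :
    ∑ i ∈ Finset.Icc (1 : ℤ) ((n - 1) / 2),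
      e i * gauss q n (n - 2 * i) *
        ∏ j ∈ Finset.Icc (k - i + 1) ((n - 1) / 2 - i),
          (q ^ (2 * j) - 1) / (q ^ (2 * j - 2 * k + 2 * i) - 1) =
    ((q ^ (n * k) - 1) / (q - 1)) *
      ∏ j ∈ Finset.Icc (k + 1) ((n - 1) / 2),
        (q ^ (2 * j) - 1) / (q ^ (2 * j - 2 * k) - 1) :=
  stmt4_general n k hodd hk1 hk2
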